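/- Let z, z' ∈ Ĥ with continued fraction data (f_i, z_i) and (g_i, z'_i) respectively. Suppose z_m is defined and ν(z - z') > 2·Σ_{i=1}^{m} deg(f_i). Then z'_m is defined and f_i = g_i for all i ≤ m. -/

import Mathlib

universe u

/-- Evaluation of a finite continued fraction `[f₀, f₁, …, f_N]` in a field,
`cfEval [a] = a`, `cfEval (a :: l) = a + (cfEval l)⁻¹` (with the convention `0⁻¹ = 0`). -/
def cfEval {L : Type u} [Field L] : List L → L
  | [] => 0
  | a :: l => a + (cfEval l)⁻¹

/-- The Moebius maps `ρ_n = σ_n ∘ ⋯ ∘ σ_0`, where `σ_i x = (x - f_i)⁻¹`. -/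
def rho {L : Type u} [Field L] (f : ℕ → L) : ℕ → L → L
  | 0, x => (x - f 0)⁻¹
  | n + 1, x => (rho f n x - f (n + 1))⁻¹

/-- The derivative `ρ_n'` of `ρ_n`, computed by the chain rule from
`σ_i'(x) = -((x - f_i)⁻¹)²`. -/
def rho' {L : Type u} [Field L] (f : ℕ → L) : ℕ → L → L
  | 0, x => -((x - f 0)⁻¹) ^ 2
  | n + 1, x => -((rho f n x - f (n + 1))⁻¹) ^ 2 * rho' f n x

/-- An abstract presentation of the completion `K̂` of the Puiseux field
`E⟨⟨t⁻¹⟩⟩` over a field `E`.  The field `K` carries an additive valuation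
`ν` with values in `ℚ` on nonzero elements (normalized by `ν (t^r) = -r`,
where `mono r` plays the role of the monomial `t^r`), the subfield `E` is
embedded via `emb`, the simple "Laurent Puiseux polynomials" (the ring
generated by `E` and all rational powers of `t`) are dense, and `K` is
complete for `ν`. -/
structure PuiseuxCompletion (E : Type u) [Field E] where
  K : Type u
  [fieldK : Field K]
  ν : K → ℚ
  emb : E →+* K
  mono : ℚ → K
  mono_zero : mono 0 = 1
  mono_mul : ∀ r s : ℚ, mono r * mono s = mono (r + s)
  ν_mono : ∀ r : ℚ, ν (mono r) = -r
  ν_emb : ∀ e : E, e ≠ 0 → ν (emb e) = 0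
  ν_mul : ∀ x y : K, x ≠ 0 → y ≠ 0 → ν (x * y) = ν x + ν y
  ν_add : ∀ x y : K, x ≠ 0 → y ≠ 0 → x + y ≠ 0 → min (ν x) (ν y) ≤ ν (x + y)
  dense' : ∀ z : K, ∀ C : ℚ,
    ∃ f ∈ Subring.closure (Set.range emb ∪ Set.range mono), z = f ∨ C < ν (z - f)
  complete' : ∀ uSeq : ℕ → K,
    (∀ C : ℚ, ∃ N : ℕ, ∀ m ≥ N, ∀ n ≥ N, uSeq m = uSeq n ∨ C < ν (uSeq m - uSeq n)) →
    ∃ z : K, ∀ C : ℚ, ∃ N : ℕ, ∀ n ≥ N, uSeq n = z ∨ C < ν (uSeq n - z)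

attribute [instance] PuiseuxCompletion.fieldK

namespace PuiseuxCompletion

variable {E : Type u} [Field E] (P : PuiseuxCompletion E)

/-- The ring `Ā = E⟨t⟩` of Puiseux polynomials: finite `E`-linear combinations of
nonnegative rational powers of `t`. -/
def Abar : Subring P.K :=
  Subring.closure (Set.range P.emb ∪ P.mono '' {r : ℚ | 0 ≤ r})

/-- `deg f = -ν f`. -/
def deg (f : P.K) : ℚ := -P.ν f

/-- The rational Puiseux field `k̃ = Quot(Ā) = ⋃ₙ E(t^{1/n})`, as a subfield of `K̂`. -/
def ktilde : Subfield P.K := Subfield.closure (P.Abar : Set P.K)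

/-- `uSeq n → z` with respect to the valuation `ν`. -/
def TendsTo (uSeq : ℕ → P.K) (z : P.K) : Prop :=
  ∀ C : ℚ, ∃ N : ℕ, ∀ n ≥ N, uSeq n = z ∨ C < P.ν (uSeq n - z)

/-- One step of the continued fraction algorithm succeeds at index `i`:
`f i` is the Puiseux polynomial with `ν (z_i - f i) > 0`, the fraction does not
end at `i` (`z_i ≠ f i`), and `z_{i+1} = (z_i - f i)⁻¹`. -/
def CFStep (f zs : ℕ → P.K) (i : ℕ) : Prop :=
  f i ∈ P.Abar ∧ 0 < P.ν (zs i - f i) ∧ zs i ≠ f i ∧ zs (i + 1) = (zs i - f i)⁻¹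

/-- The `n`-th approximant `x_n = [f₀, …, f_n]_{ev}`. -/
def approx (f : ℕ → P.K) (n : ℕ) : P.K :=
  cfEval (List.ofFn fun i : Fin (n + 1) => f i)

/-- The continued fraction of `z` begins with the coefficients `f 0, …, f n`. -/
def CFBegins (f : ℕ → P.K) (n : ℕ) (z : P.K) : Prop :=
  ∃ zs : ℕ → P.K, zs 0 = z ∧ (∀ i < n, P.CFStep f zs i) ∧
    f n ∈ P.Abar ∧ (zs n = f n ∨ 0 < P.ν (zs n - f n))

/-- `z` is the value of the continued fraction expression with coefficients `f`
and length `L` (finite or infinite); the coefficients are Puiseux polynomials of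
positive degree after the zeroth one. -/
def CFExprEval (f : ℕ → P.K) (L : WithTop ℕ) (z : P.K) : Prop :=
  f 0 ∈ P.Abar ∧
  (∀ i : ℕ, 1 ≤ i → (i : WithTop ℕ) ≤ L → f i ∈ P.Abar ∧ 0 < P.deg (f i)) ∧
  ((∃ N : ℕ, L = (N : WithTop ℕ) ∧ z = P.approx f N) ∨
    (L = ⊤ ∧ P.TendsTo (fun n => P.approx f n) z))

/-- The equivalence relation `(a, r) ~ (a', r')` iff `r = r'` and `ν (a - a') ≥ r`
(the pairs define the same Berkovich point `η_{a,r}` of type II or III). -/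
def ballEquiv (p q : P.K × ℝ) : Prop :=
  p.2 = q.2 ∧ (p.1 = q.1 ∨ p.2 ≤ (P.ν (p.1 - q.1) : ℝ))

open scoped Classical in
/-- The Berkovich hyperbolic distance, computed on representatives. -/
noncomputable def berkDist (p q : P.K × ℝ) : ℝ :=
  if p.1 = q.1 ∨ min p.2 q.2 ≤ (P.ν (p.1 - q.1) : ℝ) then |p.2 - q.2|
  else p.2 + q.2 - 2 * (P.ν (p.1 - q.1) : ℝ)

/-- The closed ball `B_a^{[r]} = {b : ν (b - a) ≥ r}` corresponding to `η_{a,r}`. -/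
def closedBall (a : P.K) (r : ℝ) : Set P.K :=
  {b : P.K | b = a ∨ r ≤ (P.ν (b - a) : ℝ)}

/-- The Moebius transformation associated to a `2 × 2` matrix. -/
def mob (g : Matrix (Fin 2) (Fin 2) P.K) (x : P.K) : P.K :=
  (g 0 0 * x + g 0 1) / (g 1 0 * x + g 1 1)

/-- The ring `A_M = E[t^{1/M}]`. -/
def AM (M : ℕ) : Subring P.K :=
  Subring.closure (Set.range P.emb ∪ {P.mono (1 / (M : ℚ))})

/-- The field `E(t^{1/M})`, whose `ν`-completion inside `K̂` is `K_M = E((t^{-1/M}))`. -/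
def kM (M : ℕ) : Subfield P.K :=
  Subfield.closure (Set.range P.emb ∪ {P.mono (1 / (M : ℚ))})

end PuiseuxCompletion

/-!
Run the continued fraction algorithm on `z'` with the coefficients `f i` of `z`. For `i < m`
put `δᵢ = ν (zᵢ - fᵢ) > 0`; then `deg f_{i+1} = -ν z_{i+1} = δᵢ`. If
`ν (zᵢ - z'ᵢ) > 2 Σ_{j > i} deg f_j ≥ δᵢ`, the ultrametric inequality gives
`ν (z'ᵢ - fᵢ) = δᵢ`, so `fᵢ` is also the coefficient of `z'ᵢ`, and after inversion
`ν (z_{i+1} - z'_{i+1}) = ν (zᵢ - z'ᵢ) - 2 δᵢ`: each step consumes exactly `2 deg f_{i+1}`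
of the closeness budget, and what is left at `i = m` is `ν (z_m - z'_m) > 0`.
-/

def completeQuotients {L : Type u} [Field L] (f : ℕ → L) (z : L) : ℕ → L
  | 0 => z
  | n + 1 => (completeQuotients f z n - f n)⁻¹

namespace PuiseuxCompletion

variable {E : Type u} [Field E] (P : PuiseuxCompletion E)

lemma ν_one : P.ν 1 = 0 := by
  simpa [P.mono_zero] using P.ν_mono 0

lemma ν_neg (x : P.K) : P.ν (-x) = P.ν x := by
  rcases eq_or_ne x 0 with rfl | hx
  · rw [neg_zero]
  have hm1 : (-1 : P.K) ≠ 0 := by norm_num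
  have h1 : P.ν (-1 : P.K) = 0 := by
    have := P.ν_mul (-1) (-1) hm1 hm1
    rw [neg_mul_neg, one_mul, P.ν_one] at this
    linarith
  rw [← neg_one_mul, P.ν_mul _ _ hm1 hx, h1, zero_add]

lemma ν_sub_comm (x y : P.K) : P.ν (x - y) = P.ν (y - x) := by
  rw [← neg_sub, P.ν_neg]

lemma ν_inv {x : P.K} (hx : x ≠ 0) : P.ν x⁻¹ = -P.ν x := by
  have := P.ν_mul x x⁻¹ hx (inv_ne_zero hx)
  rw [mul_inv_cancel₀ hx, P.ν_one] at this
  linarith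

/-- The disjunct `a = b` plays the role of `ν 0 = ∞`; the value `P.ν 0` itself is junk. -/
def Close (C : ℚ) (a b : P.K) : Prop :=
  a = b ∨ C < P.ν (a - b)

variable {P}

lemma Close.symm {C : ℚ} {a b : P.K} (h : P.Close C a b) : P.Close C b a := by
  rw [Close, P.ν_sub_comm]
  exact h.imp Eq.symm id

lemma Close.mono {C C' : ℚ} {a b : P.K} (hC : C' ≤ C) (h : P.Close C a b) :
    P.Close C' a b :=
  h.imp_right hC.trans_lt

lemma close_sub_right {C : ℚ} {a b c : P.K} : P.Close C (a - c) (b - c) ↔ P.Close C a b := by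
  rw [Close, Close, sub_left_inj, sub_sub_sub_cancel_right]

lemma Close.trans {C : ℚ} {a b c : P.K} (hab : P.Close C a b) (hbc : P.Close C b c) :
    P.Close C a c := by
  rcases eq_or_ne a b with rfl | hab'
  · exact hbc
  rcases eq_or_ne b c with rfl | hbc'
  · exact hab
  rcases eq_or_ne a c with hac | hac
  · exact Or.inl hac
  have hmin := P.ν_add (a - b) (b - c) (sub_ne_zero.mpr hab') (sub_ne_zero.mpr hbc')
    (by rwa [sub_add_sub_cancel, sub_ne_zero])
  rw [sub_add_sub_cancel] at hmin
  exact Or.inr ((lt_min (hab.resolve_left hab') (hbc.resolve_left hbc')).trans_le hmin)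

lemma ν_eq_of_close {x y : P.K} (hx : x ≠ 0) (h : P.Close (P.ν x) x y) :
    y ≠ 0 ∧ P.ν y = P.ν x := by
  rcases eq_or_ne x y with rfl | hxy
  · exact ⟨hx, rfl⟩
  have hlt := h.resolve_left hxy
  have hy : y ≠ 0 := by
    rintro rfl
    rw [sub_zero] at hlt
    exact lt_irrefl _ hlt
  have hle : P.ν x ≤ P.ν y := by
    have := P.ν_add x (y - x) hx (sub_ne_zero.mpr hxy.symm) (by rwa [add_sub_cancel])
    rwa [P.ν_sub_comm, min_eq_left hlt.le, add_sub_cancel] at this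
  have hge : P.ν y ≤ P.ν x := by
    have := P.ν_add y (x - y) hy (sub_ne_zero.mpr hxy) (by simpa using hx)
    rw [add_sub_cancel] at this
    exact (min_le_iff.mp this).resolve_right hlt.not_ge
  exact ⟨hy, le_antisymm hge hle⟩

lemma Close.inv {C : ℚ} {x y : P.K} (hx : x ≠ 0) (hy : y ≠ 0)
    (h : P.Close (C + P.ν x + P.ν y) x y) : P.Close C x⁻¹ y⁻¹ := by
  rcases eq_or_ne x y with rfl | hxy
  · exact Or.inl rfl
  have hformula : x⁻¹ - y⁻¹ = (y - x) * (x⁻¹ * y⁻¹) := by field_simp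
  have hprod : x⁻¹ * y⁻¹ ≠ 0 := mul_ne_zero (inv_ne_zero hx) (inv_ne_zero hy)
  right
  rw [hformula, P.ν_mul _ _ (sub_ne_zero.mpr hxy.symm) hprod,
    P.ν_mul _ _ (inv_ne_zero hx) (inv_ne_zero hy), P.ν_inv hx, P.ν_inv hy, P.ν_sub_comm]
  linarith [h.resolve_left hxy]

variable {f zs : ℕ → P.K}

lemma CFStep.deg_succ {j : ℕ} (hs : P.CFStep f zs j)
    (hnext : P.Close 0 (zs (j + 1)) (f (j + 1))) : P.deg (f (j + 1)) = P.ν (zs j - f j) := by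
  obtain ⟨-, hpos, hne, hrec⟩ := hs
  have hx : zs j - f j ≠ 0 := sub_ne_zero.mpr hne
  have hν : P.ν (zs (j + 1)) = -P.ν (zs j - f j) := by rw [hrec, P.ν_inv hx]
  obtain ⟨-, h⟩ := ν_eq_of_close (by rw [hrec]; exact inv_ne_zero hx) (hnext.mono (by linarith))
  rw [deg, h, hν, neg_neg]

lemma CFStep.of_close {zs' : ℕ → P.K} {i : ℕ} {C : ℚ} (hs : P.CFStep f zs i)
    (hrec : zs' (i + 1) = (zs' i - f i)⁻¹) (hC : 0 ≤ C)
    (h : P.Close (2 * P.ν (zs i - f i) + C) (zs i) (zs' i)) :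
    P.CFStep f zs' i ∧ P.Close C (zs (i + 1)) (zs' (i + 1)) := by
  obtain ⟨hf, hpos, hne, hnext⟩ := hs
  have hx : zs i - f i ≠ 0 := sub_ne_zero.mpr hne
  have h' := close_sub_right (c := f i) |>.mpr h
  obtain ⟨hy, hδ⟩ := ν_eq_of_close hx (h'.mono (by linarith))
  refine ⟨⟨hf, hδ ▸ hpos, sub_ne_zero.mp hy, hrec⟩, ?_⟩
  rw [hnext, hrec]
  exact Close.inv hx hy (h'.mono (by rw [hδ]; linarith))

variable {m : ℕ}

lemma deg_pos_of_cfSteps (hstep : ∀ i < m, P.CFStep f zs i)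
    (hnear : ∀ i ≤ m, P.Close 0 (zs i) (f i)) {j : ℕ} (hj : j ∈ Finset.Ioc 0 m) :
    0 < P.deg (f j) := by
  obtain ⟨hj0, hjm⟩ := Finset.mem_Ioc.mp hj
  obtain ⟨k, rfl⟩ := Nat.exists_eq_add_of_lt hj0
  rw [zero_add] at hjm ⊢
  rw [(hstep k hjm).deg_succ (hnear (k + 1) hjm)]
  exact (hstep k hjm).2.1

lemma close_completeQuotients (hstep : ∀ i < m, P.CFStep f zs i)
    (hnear : ∀ i ≤ m, P.Close 0 (zs i) (f i)) {w : P.K}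
    (hw : P.Close (2 * ∑ j ∈ Finset.Ioc 0 m, P.deg (f j)) (zs 0) w) :
    ∀ i ≤ m, (∀ j < i, P.CFStep f (completeQuotients f w) j) ∧
      P.Close (2 * ∑ j ∈ Finset.Ioc i m, P.deg (f j)) (zs i) (completeQuotients f w i)
  | 0, _ => ⟨fun _ h ↦ absurd h (Nat.not_lt_zero _), hw⟩
  | i + 1, hi => by
    obtain ⟨hsteps, hclose⟩ := close_completeQuotients hstep hnear hw i (by omega)
    have hsplit : ∑ j ∈ Finset.Ioc i m, P.deg (f j) =
        P.ν (zs i - f i) + ∑ j ∈ Finset.Ioc (i + 1) m, P.deg (f j) := by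
      rw [← Finset.insert_Ioc_add_one_left_eq_Ioc hi, Finset.sum_insert (by simp),
        (hstep i hi).deg_succ (hnear (i + 1) hi)]
    have hnonneg : 0 ≤ ∑ j ∈ Finset.Ioc (i + 1) m, P.deg (f j) :=
      Finset.sum_nonneg fun j hj ↦
        (deg_pos_of_cfSteps hstep hnear (Finset.Ioc_subset_Ioc_left (Nat.zero_le _) hj)).le
    rw [hsplit, mul_add] at hclose
    obtain ⟨hs, hc⟩ := (hstep i hi).of_close rfl (mul_nonneg zero_le_two hnonneg) hclose
    exact ⟨fun j hj ↦ (Nat.lt_succ_iff_lt_or_eq.mp hj).elim (hsteps j) (· ▸ hs), hc⟩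

end PuiseuxCompletion

open PuiseuxCompletion in
theorem statement6_general {E : Type u} [Field E] (P : PuiseuxCompletion E)
    (z z' : P.K) (f zs : ℕ → P.K) (m : ℕ)
    (h0 : zs 0 = z) (hstep : ∀ i < m, P.CFStep f zs i)
    (hcm : zs m = f m ∨ 0 < P.ν (zs m - f m))
    (hclose : z = z' ∨ 2 * ∑ i ∈ Finset.Icc 1 m, P.deg (f i) < P.ν (z - z')) :
    ∃ zs' : ℕ → P.K, zs' 0 = z' ∧ (∀ i < m, P.CFStep f zs' i) ∧
      (zs' m = f m ∨ 0 < P.ν (zs' m - f m)) := by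
  have hnear : ∀ i ≤ m, P.Close 0 (zs i) (f i) := fun i hi ↦ by
    rcases hi.lt_or_eq with hi | rfl
    · exact Or.inr (hstep i hi).2.1
    · exact hcm
  have hw : P.Close (2 * ∑ j ∈ Finset.Ioc 0 m, P.deg (f j)) (zs 0) z' := by
    rwa [h0, ← Finset.Icc_add_one_left_eq_Ioc]
  obtain ⟨hsteps, hlast⟩ := close_completeQuotients hstep hnear hw m le_rfl
  rw [Finset.Ioc_self, Finset.sum_empty, mul_zero] at hlast
  exact ⟨completeQuotients f z', rfl, hsteps, hlast.symm.trans (hnear m le_rfl)⟩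

open PuiseuxCompletion in
/-- if `z_m` is defined and `ν (z - z') > 2 Σ_{i=1}^m deg f_i`, then
`z'_m` is defined and the continued fraction data of `z'` has the same
coefficients `f_i` for all `i ≤ m`. -/
theorem statement6 {E : Type u} [Field E] (P : PuiseuxCompletion E)
    (z z' : P.K) (f zs : ℕ → P.K) (m : ℕ)
    (h0 : zs 0 = z) (hstep : ∀ i < m, P.CFStep f zs i)
    (hfm : f m ∈ P.Abar) (hcm : zs m = f m ∨ 0 < P.ν (zs m - f m))
    (hclose : z = z' ∨ 2 * ∑ i ∈ Finset.Icc 1 m, P.deg (f i) < P.ν (z - z')) :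
    ∃ zs' : ℕ → P.K, zs' 0 = z' ∧ (∀ i < m, P.CFStep f zs' i) ∧
      (zs' m = f m ∨ 0 < P.ν (zs' m - f m)) :=
  statement6_general P z z' f zs m h0 hstep hcm hclose
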